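/- Let β > 2, k ∈ ℕ with k ≥ 1, and Λ : (0,∞) → [0,1] be measurable with Λ(y) ≤ 1 for all y. Then for every ρ > k-1 and b ≥ 0, the integral F_b(ρ) = ((β-1)^k / k!) ∫_b^∞ ⋯ ∫_b^∞ 1{Λ(y_1)+⋯+Λ(y_k) > ρ} ∏_{i=1}^k y_i^{-β} dy_i is finite, provided additionally that lim_{y→0} Λ(y) = 0 when b = 0. -/
import Mathlib


open MeasureTheory

/-- Finiteness of `F_b(ρ)`: the `k`-fold integral over `(b,∞)^k` of the indicator
`1{Λ(y₁)+⋯+Λ(y_k) > ρ}` against the product Pareto densities is finite, where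
`ρ > k-1`, `Λ ≤ 1`, and, if `b = 0`, `Λ(y) → 0` as `y ↓ 0`. -/
theorem stmt_3 (β : ℝ) (hβ : 2 < β) (k : ℕ) (hk : 1 ≤ k)
    (Λ : ℝ → ℝ) (hmeas : Measurable Λ)
    (hΛ : ∀ y > (0:ℝ), 0 ≤ Λ y ∧ Λ y ≤ 1)
    (ρ b : ℝ) (hρ : (k : ℝ) - 1 < ρ) (hb : 0 ≤ b)
    (hb0 : b = 0 → Filter.Tendsto Λ (nhdsWithin 0 (Set.Ioi 0)) (nhds 0)) :
    IntegrableOn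
      (fun y : Fin k → ℝ =>
        Set.indicator {y : Fin k → ℝ | ρ < ∑ i, Λ (y i)}
          (fun y => ∏ i, (y i) ^ (-β)) y)
      (Set.univ.pi fun _ : Fin k => Set.Ioi b) := by
  -- choose a threshold `c > 0` such that on the domain, points in the indicator set
  -- have all coordinates `≥ c`.
  obtain ⟨c, hc0, hc⟩ : ∃ c : ℝ, 0 < c ∧ ∀ y : Fin k → ℝ, (∀ i, b < y i) →
      ρ < ∑ i, Λ (y i) → ∀ i, c ≤ y i := by
    rcases eq_or_lt_of_le hb with hb0' | hbpos
    · -- case b = 0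
      have ht := hb0 hb0'.symm
      set ε := ρ - ((k : ℝ) - 1) with hε
      have hεpos : 0 < ε := by simp [hε]; linarith
      obtain ⟨δ, hδpos, hδ⟩ := (Metric.tendsto_nhdsWithin_nhds.mp ht) ε hεpos
      refine ⟨δ, hδpos, fun y hy hsum i => ?_⟩
      by_contra hlt
      push_neg at hlt
      have hyi0 : 0 < y i := by rw [hb0']; exact hy i
      have hdist : dist (y i) 0 < δ := by
        rw [Real.dist_eq, sub_zero, abs_of_pos hyi0]; linarith
      have hsmall : Λ (y i) < ε := by
        have := hδ hyi0 hdist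
        rw [Real.dist_eq, sub_zero] at this
        calc Λ (y i) ≤ |Λ (y i)| := le_abs_self _
          _ < ε := this
      -- but Λ (y i) ≥ ρ - (k-1) = ε
      have hsum_others : ∑ j ∈ Finset.univ.erase i, Λ (y j) ≤ (k : ℝ) - 1 := by
        have : ∑ j ∈ Finset.univ.erase i, Λ (y j) ≤
            (Finset.univ.erase i).card • (1 : ℝ) := by
          apply Finset.sum_le_card_nsmul
          intro j _
          have : 0 < y j := by rw [hb0']; exact hy j
          exact (hΛ (y j) this).2
        rw [Finset.card_erase_of_mem (Finset.mem_univ i), Finset.card_univ,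
          Fintype.card_fin, nsmul_eq_mul, mul_one] at this
        calc ∑ j ∈ Finset.univ.erase i, Λ (y j) ≤ ((k - 1 : ℕ) : ℝ) := this
          _ ≤ (k : ℝ) - 1 := by
            rw [Nat.cast_sub hk]; simp
      have hsplit : ∑ j, Λ (y j) = Λ (y i) + ∑ j ∈ Finset.univ.erase i, Λ (y j) :=
        (Finset.add_sum_erase _ _ (Finset.mem_univ i)).symm
      rw [hsplit] at hsum
      have : ε ≤ Λ (y i) := by simp only [hε]; linarith
      linarith
    · exact ⟨b, hbpos, fun y hy _ i => (hy i).le⟩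
  -- the dominating function: product of indicators of `Ici c`
  set g : (Fin k → ℝ) → ℝ :=
    fun y => ∏ i, Set.indicator (Set.Ici c) (fun x : ℝ => x ^ (-β)) (y i) with hg
  have hg_int : Integrable g := by
    apply Integrable.fintype_prod (f := fun _ (x : ℝ) => Set.indicator (Set.Ici c)
      (fun x : ℝ => x ^ (-β)) x)
    intro i
    rw [integrable_indicator_iff measurableSet_Ici, integrableOn_Ici_iff_integrableOn_Ioi]
    exact integrableOn_Ioi_rpow_of_lt (by linarith) hc0
  have hg_nonneg : ∀ y, 0 ≤ g y := by
    intro y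
    apply Finset.prod_nonneg
    intro i _
    apply Set.indicator_nonneg
    intro x hx
    exact Real.rpow_nonneg (le_trans hc0.le hx) _
  have hS : MeasurableSet {y : Fin k → ℝ | ρ < ∑ i, Λ (y i)} :=
    measurableSet_lt measurable_const
      (Finset.measurable_sum _ fun i _ => hmeas.comp (measurable_pi_apply i))
  have hf_meas : Measurable (fun y : Fin k → ℝ => ∏ i, (y i) ^ (-β)) := by
    fun_prop
  have hdom : MeasurableSet (Set.univ.pi fun _ : Fin k => Set.Ioi b) :=
    MeasurableSet.univ_pi fun _ => measurableSet_Ioi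
  apply Integrable.mono' (hg_int.integrableOn)
    ((hf_meas.indicator hS).aestronglyMeasurable)
  rw [ae_restrict_iff' hdom]
  filter_upwards with y hy
  have hy' : ∀ i, b < y i := fun i => hy i (Set.mem_univ i)
  by_cases hyS : y ∈ {y : Fin k → ℝ | ρ < ∑ i, Λ (y i)}
  · have hyc : ∀ i, c ≤ y i := hc y hy' hyS
    rw [Set.indicator_of_mem hyS]
    have hfnn : 0 ≤ ∏ i, (y i) ^ (-β) :=
      Finset.prod_nonneg fun i _ => Real.rpow_nonneg (le_trans hc0.le (hyc i)) _
    rw [Real.norm_eq_abs, abs_of_nonneg hfnn, hg]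
    apply le_of_eq
    apply Finset.prod_congr rfl
    intro i _
    exact (Set.indicator_of_mem (hyc i) (fun x : ℝ => x ^ (-β))).symm
  · rw [Set.indicator_of_notMem hyS]
    simpa using hg_nonneg y
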